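/- Let E > 0, let T_A > T_B > 0, and let n_A > n_B ≥ 1 be natural numbers. On (ℂ²)^{⊗(n_A+n_B)} with standard basis {e_b : b ∈ {0,1}^{n_A+n_B}}, let H be the diagonal Hamiltonian with H e_b = E · wgt(b) · e_b (wgt = Hamming weight), and let ρ = γ_{T_A}^{⊗ n_A} ⊗ γ_{T_B}^{⊗ n_B}, where γ_T = diag(1, e^{−E/T})/(1 + e^{−E/T}). Then there exists a unitary U with tr(U ρ U† H) < tr(ρ H) if and only if T_A/T_B > (n_B + 1)/n_B. -/

import Mathlib

/-- The Gibbs occupation probability of level `j ∈ {0,1}` of a two-level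
system with energy gap `E` at temperature `T`. -/
noncomputable def qubitProb (E T : ℝ) (j : Fin 2) : ℝ :=
  (if j = 0 then 1 else Real.exp (-E / T)) / (1 + Real.exp (-E / T))

/-!
For a state `diag p` commuting with `H = diag h`, one has
`tr (U ρ U† H) = ∑ i j, |U i j|² p j h i`, and `|U i j|²` is doubly stochastic. By Birkhoff's
theorem it is a convex combination of permutation matrices, and by the rearrangement inequality
no permutation lowers the energy when `p` antivaries with `h`; otherwise swapping two levels
`i, j` with `h i < h j`, `p i < p j` does. So energy can be extracted iff `p` does not antivary
with `h`.

For the product Gibbs state, `p b ∝ exp (-E ∑ i, b i / T i)`, so this asks for configurations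
`b, b'` where `b'` has more excitations but a smaller value of `a / T_A + c / T_B`
(`a`, `c` the hot and cold excitation counts). Gaining at least one excitation while losing at
most `n_B` cold ones changes that value by at least `(n_B + 1) / T_A - n_B / T_B`, which is
negative exactly when `T_A / T_B > (n_B + 1) / n_B`; then `n_B + 1` hot excitations against
`n_B` cold ones is such a pair.
-/

open Finset Matrix Real

section EnergyExtraction

variable {n : Type*} [Fintype n] [DecidableEq n]

lemma re_trace_diagonal_mul_diagonal (p h : n → ℝ) :
    (trace (diagonal (fun i => (p i : ℂ)) * diagonal (fun i => (h i : ℂ)))).re = p ⬝ᵥ h := by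
  simp [diagonal_mul_diagonal, trace_diagonal, Complex.re_sum, dotProduct]

lemma re_trace_mul_diagonal_mul_star_mul_diagonal (U : Matrix n n ℂ) (p h : n → ℝ) :
    (trace (U * diagonal (fun i => (p i : ℂ)) * star U * diagonal (fun i => (h i : ℂ)))).re =
      h ⬝ᵥ (of (fun i j => Complex.normSq (U i j)) *ᵥ p) := by
  simp only [trace, Matrix.diag, mul_apply, diagonal_apply, star_apply, RCLike.star_def, mul_ite,
    mul_zero, sum_ite_eq', mem_univ, if_true, sum_mul, Complex.re_sum, dotProduct, mulVec,
    of_apply, mul_sum]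
  refine sum_congr rfl fun i _ => sum_congr rfl fun j _ => ?_
  rw [mul_right_comm (U i j), Complex.mul_conj]
  norm_cast
  ring

lemma normSq_mem_doublyStochastic {U : Matrix n n ℂ} (hU : U ∈ unitaryGroup n ℂ) :
    of (fun i j => Complex.normSq (U i j)) ∈ doublyStochastic ℝ n := by
  rw [mem_doublyStochastic_iff_sum]
  refine ⟨fun i j => Complex.normSq_nonneg _, fun i => ?_, fun j => ?_⟩
  · simpa [mul_apply, one_apply, Complex.mul_conj, Complex.re_sum] using
      congrArg (fun M => (M i i).re) (mem_unitaryGroup_iff.mp hU)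
  · simpa [mul_apply, one_apply, Complex.mul_conj, Complex.re_sum, mul_comm] using
      congrArg (fun M => (M j j).re) (mem_unitaryGroup_iff'.mp hU)

lemma Antivary.dotProduct_le_dotProduct_mulVec {p h : n → ℝ} (hph : Antivary p h)
    {D : Matrix n n ℝ} (hD : D ∈ doublyStochastic ℝ n) : p ⬝ᵥ h ≤ h ⬝ᵥ (D *ᵥ p) := by
  obtain ⟨w, hw_nonneg, hw_sum, rfl⟩ := exists_eq_sum_perm_of_mem_doublyStochastic hD
  simp only [sum_mulVec, smul_mulVec, permMatrix_mulVec, dotProduct_sum, dotProduct_smul,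
    smul_eq_mul]
  calc p ⬝ᵥ h = ∑ σ, w σ * p ⬝ᵥ h := by rw [← sum_mul, hw_sum, one_mul]
    _ ≤ ∑ σ, w σ * h ⬝ᵥ (p ∘ σ) := by
      gcongr with σ
      · exact hw_nonneg σ
      · rw [dotProduct_comm h]
        exact hph.sum_mul_le_sum_comp_perm_mul

lemma permMatrix_mem_unitaryGroup (σ : Equiv.Perm n) : σ.permMatrix ℂ ∈ unitaryGroup n ℂ := by
  rw [mem_unitaryGroup_iff, star_eq_conjTranspose, conjTranspose_permMatrix, ← permMatrix_mul,
    inv_mul_cancel, permMatrix_one]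

lemma permMatrix_mul_diagonal_mul_star (σ : Equiv.Perm n) (d : n → ℂ) :
    σ.permMatrix ℂ * diagonal d * star (σ.permMatrix ℂ) = diagonal (fun i => d (σ i)) := by
  rw [star_eq_conjTranspose, conjTranspose_permMatrix, PEquiv.toMatrix_toPEquiv_mul,
    PEquiv.mul_toMatrix_toPEquiv, submatrix_submatrix, Equiv.Perm.inv_def, Equiv.symm_symm]
  exact submatrix_diagonal_equiv d σ

lemma dotProduct_comp_swap_lt {p h : n → ℝ} {i j : n} (hh : h i < h j) (hp : p i < p j) :
    (p ∘ Equiv.swap i j) ⬝ᵥ h < p ⬝ᵥ h := by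
  have hij : i ≠ j := fun hij => hh.ne (congrArg h hij)
  rw [← sub_neg, ← sub_dotProduct, dotProduct,
    Fintype.sum_eq_add i j hij fun k hk => by simp [Equiv.swap_apply_of_ne_of_ne hk.1 hk.2]]
  simp only [Pi.sub_apply, Function.comp_apply, Equiv.swap_apply_left, Equiv.swap_apply_right]
  nlinarith

theorem exists_unitary_re_trace_lt_iff_not_antivary (p h : n → ℝ) :
    (∃ U ∈ unitaryGroup n ℂ,
      (trace (U * diagonal (fun i => (p i : ℂ)) * star U * diagonal (fun i => (h i : ℂ)))).re <
        (trace (diagonal (fun i => (p i : ℂ)) * diagonal (fun i => (h i : ℂ)))).re) ↔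
      ¬ Antivary p h := by
  simp only [re_trace_diagonal_mul_diagonal]
  constructor
  · rintro ⟨U, hU, hlt⟩ hph
    rw [re_trace_mul_diagonal_mul_star_mul_diagonal] at hlt
    exact hlt.not_ge (hph.dotProduct_le_dotProduct_mulVec (normSq_mem_doublyStochastic hU))
  · intro hph
    obtain ⟨i, j, hh, hp⟩ : ∃ i j, h i < h j ∧ p i < p j := by simpa [Antivary] using hph
    refine ⟨(Equiv.swap i j).permMatrix ℂ, permMatrix_mem_unitaryGroup _, ?_⟩
    rw [permMatrix_mul_diagonal_mul_star]
    exact (re_trace_diagonal_mul_diagonal (p ∘ Equiv.swap i j) h).symm ▸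
      dotProduct_comp_swap_lt hh hp

end EnergyExtraction

lemma qubitProb_eq_exp (E T : ℝ) (j : Fin 2) :
    qubitProb E T j = exp (-E * (j : ℕ) / T) / (1 + exp (-E / T)) := by
  fin_cases j <;> simp [qubitProb]

section Gibbs

variable {ι : Type*} [Fintype ι]

lemma prod_qubitProb (E : ℝ) (T : ι → ℝ) (b : ι → Fin 2) :
    ∏ i, qubitProb E (T i) (b i) =
      exp (-E * ∑ i, ((b i : ℕ) : ℝ) / T i) / ∏ i, (1 + exp (-E / T i)) := by
  simp only [qubitProb_eq_exp, prod_div_distrib, ← exp_sum, mul_sum, mul_div_assoc]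

lemma prod_qubitProb_lt_prod_qubitProb_iff {E : ℝ} (hE : 0 < E) (T : ι → ℝ)
    (b b' : ι → Fin 2) :
    ∏ i, qubitProb E (T i) (b i) < ∏ i, qubitProb E (T i) (b' i) ↔
      ∑ i, ((b' i : ℕ) : ℝ) / T i < ∑ i, ((b i : ℕ) : ℝ) / T i := by
  have hZ : 0 < ∏ i, (1 + exp (-E / T i)) := prod_pos fun i _ => by positivity
  rw [prod_qubitProb, prod_qubitProb, div_lt_div_iff_of_pos_right hZ, exp_lt_exp,
    neg_mul, neg_mul, neg_lt_neg_iff, mul_lt_mul_iff_right₀ hE]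

lemma not_antivary_prod_qubitProb_iff {E : ℝ} (hE : 0 < E) (T : ι → ℝ) :
    ¬ Antivary (fun b : ι → Fin 2 => ∏ i, qubitProb E (T i) (b i))
        (fun b => E * ∑ i, ((b i : ℕ) : ℝ)) ↔
      ∃ b b' : ι → Fin 2, ∑ i, ((b i : ℕ) : ℝ) < ∑ i, ((b' i : ℕ) : ℝ) ∧
        ∑ i, ((b' i : ℕ) : ℝ) / T i < ∑ i, ((b i : ℕ) : ℝ) / T i := by
  simp only [Antivary, not_forall, not_le, exists_prop, mul_lt_mul_iff_right₀ hE,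
    prod_qubitProb_lt_prod_qubitProb_iff hE]

end Gibbs

lemma div_add_div_le_div_add_div {T_A T_B : ℝ} {k a c a' c' : ℕ} (hTB : 0 < T_B)
    (hT : T_B ≤ T_A) (hratio : T_A * k ≤ (k + 1) * T_B) (hc : c ≤ k)
    (hw : a + c < a' + c') :
    (a : ℝ) / T_A + c / T_B ≤ a' / T_A + c' / T_B := by
  have hTA : 0 < T_A := hTB.trans_le hT
  have hw' : (a : ℝ) + c + 1 ≤ a' + c' := by exact_mod_cast hw
  have hc' : (c : ℝ) ≤ k := by exact_mod_cast hc
  rw [div_add_div _ _ hTA.ne' hTB.ne', div_add_div _ _ hTA.ne' hTB.ne',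
    div_le_div_iff_of_pos_right (by positivity)]
  -- `(a' - a) T_B + (c' - c) T_A = (a' + c' - a - c) T_B + (c' - c) (T_A - T_B)
  --   ≥ T_B - k (T_A - T_B) ≥ 0`
  nlinarith [mul_le_mul_of_nonneg_right hw' hTB.le,
    mul_nonneg (by positivity : (0 : ℝ) ≤ c') (sub_nonneg.2 hT),
    mul_le_mul_of_nonneg_right hc' (sub_nonneg.2 hT)]

section TwoTemperatures

variable {nA nB : ℕ}

lemma sum_val_eq_sum_castAdd_add_sum_natAdd (b : Fin (nA + nB) → Fin 2) :
    ∑ i, ((b i : ℕ) : ℝ) =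
      ((∑ i : Fin nA, (b (Fin.castAdd nB i) : ℕ) +
        ∑ j : Fin nB, (b (Fin.natAdd nA j) : ℕ) : ℕ) : ℝ) := by
  simp [Fin.sum_univ_add]

lemma sum_val_div_ite_lt_eq (T_A T_B : ℝ) (b : Fin (nA + nB) → Fin 2) :
    ∑ i, ((b i : ℕ) : ℝ) / (if (i : ℕ) < nA then T_A else T_B) =
      (∑ i : Fin nA, (b (Fin.castAdd nB i) : ℕ) : ℕ) / T_A +
        (∑ j : Fin nB, (b (Fin.natAdd nA j) : ℕ) : ℕ) / T_B := by
  simp [Fin.sum_univ_add, sum_div]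

lemma sum_val_natAdd_le (b : Fin (nA + nB) → Fin 2) :
    ∑ j : Fin nB, (b (Fin.natAdd nA j) : ℕ) ≤ nB :=
  (sum_le_card_nsmul _ _ 1 fun j _ => Fin.is_le _).trans (by simp)

lemma exists_sum_lt_and_sum_div_lt_iff {T_A T_B : ℝ} (hTB : 0 < T_B) (hT : T_B < T_A)
    (hnB : 1 ≤ nB) (hn : nB < nA) :
    (∃ b b' : Fin (nA + nB) → Fin 2, ∑ i, ((b i : ℕ) : ℝ) < ∑ i, ((b' i : ℕ) : ℝ) ∧
      ∑ i, ((b' i : ℕ) : ℝ) / (if (i : ℕ) < nA then T_A else T_B) <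
        ∑ i, ((b i : ℕ) : ℝ) / (if (i : ℕ) < nA then T_A else T_B)) ↔
      ((nB : ℝ) + 1) / nB < T_A / T_B := by
  have hnB' : (0 : ℝ) < nB := by exact_mod_cast hnB
  simp only [sum_val_eq_sum_castAdd_add_sum_natAdd, sum_val_div_ite_lt_eq, Nat.cast_lt]
  constructor
  · rintro ⟨b, b', hw, hS⟩
    by_contra hratio
    rw [not_lt, div_le_div_iff₀ hTB hnB'] at hratio
    exact hS.not_ge (div_add_div_le_div_add_div hTB hT.le hratio (sum_val_natAdd_le b) hw)
  · intro hratio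
    rw [div_lt_div_iff₀ hnB' hTB] at hratio
    have hot : ∑ i : Fin nA, ((if (i : ℕ) < nB + 1 then 1 else 0 : Fin 2) : ℕ) = nB + 1 := by
      simp only [apply_ite Fin.val, Fin.val_one, Fin.val_zero, sum_boole,
        Fin.card_filter_val_lt, Nat.cast_id]
      omega
    refine ⟨Fin.append 0 1, Fin.append (fun i => if (i : ℕ) < nB + 1 then 1 else 0) 0, ?_, ?_⟩
    all_goals simp only [Fin.append_left, Fin.append_right, Pi.zero_apply, Pi.one_apply,
      Fin.val_zero, Fin.val_one, sum_const_zero, sum_const, card_univ, Fintype.card_fin,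
      smul_eq_mul, mul_one, hot]
    · omega
    · push_cast
      rw [zero_div, zero_div, add_zero, zero_add, div_lt_div_iff₀ (hTB.trans hT) hTB]
      linarith

end TwoTemperatures

/-- **Complexity of Using Small Temperature Gaps, case `n_A > n_B`.**
On `n_A` hot and `n_B` cold equal-gap qubits, a unitary heat engine exists if
and only if `T_A/T_B > (n_B + 1)/n_B`. -/
theorem stmt_10 (E T_A T_B : ℝ) (hE : 0 < E) (hTB : 0 < T_B) (hT : T_B < T_A)
    (nA nB : ℕ) (hnB : 1 ≤ nB) (hn : nB < nA) :
    (∃ U ∈ Matrix.unitaryGroup (Fin (nA + nB) → Fin 2) ℂ,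
      (Matrix.trace (U *
          Matrix.diagonal (fun b : Fin (nA + nB) → Fin 2 =>
            ((∏ i : Fin (nA + nB), qubitProb E (if (i : ℕ) < nA then T_A else T_B) (b i) : ℝ) : ℂ)) *
          star U *
          Matrix.diagonal (fun b : Fin (nA + nB) → Fin 2 =>
            ((E * ∑ i, ((b i : ℕ) : ℝ) : ℝ) : ℂ)))).re <
      (Matrix.trace (
          Matrix.diagonal (fun b : Fin (nA + nB) → Fin 2 =>
            ((∏ i : Fin (nA + nB), qubitProb E (if (i : ℕ) < nA then T_A else T_B) (b i) : ℝ) : ℂ)) *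
          Matrix.diagonal (fun b : Fin (nA + nB) → Fin 2 =>
            ((E * ∑ i, ((b i : ℕ) : ℝ) : ℝ) : ℂ)))).re) ↔
    ((nB : ℝ) + 1) / (nB : ℝ) < T_A / T_B := by
  rw [exists_unitary_re_trace_lt_iff_not_antivary, not_antivary_prod_qubitProb_iff hE]
  exact exists_sum_lt_and_sum_div_lt_iff hTB hT hnB hn
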